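/- Let G_7 be the simple graph on vertex set {c,d,e,f,g,h,i,j,k,l} whose edge set is {cd, ce, cf, cg, ch, dg, di, dk, ef, ei, el, fj, fk, gj, gl, hi, hj, hk, hl, ij, kl}. Then G_7 is obtained from the complete graph K_7 on {a,b,c,d,e,f,g} by the following sequence of seven moves: a ∇Y move on triangle abc with new center h; a ∇Y move on triangle ade with new center i; a ∇Y move on triangle afg with new center j; a ∇Y move on triangle bdf with new center k; a ∇Y move on triangle beg with new center l; a Y∇ move at the degree-3 vertex a (whose neighbors are then h, i, j); and a Y∇ move at the degree-3 vertex b (whose neighbors are then h, k, l). -/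

import Mathlib

/-- The twelve vertices a, b, c, d, e, f, g, h, i, j, k, l
(the vertices `a` and `b` are isolated in the final graph `G₇`). -/
inductive Vtx : Type
  | a | b | c | d | e | f | g | h | i | j | k | l
  deriving DecidableEq

open Vtx

instance : Fintype Vtx :=
  ⟨{a, b, c, d, e, f, g, h, i, j, k, l}, fun x => by cases x <;> decide⟩

/-- A `∇Y` move on a simple graph at the triangle `xyz` with new center `v`:
delete the edges `xy`, `xz`, `yz` and join `v` to `x`, `y`, `z`. -/
def triangleYMove {V : Type*} (G : SimpleGraph V) (x y z v : V) : SimpleGraph V :=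
  SimpleGraph.fromEdgeSet
    ((G.edgeSet \ {s(x, y), s(x, z), s(y, z)}) ∪ {s(v, x), s(v, y), s(v, z)})

/-- A `Y∇` move on a simple graph at a degree-3 vertex `v` with neighbors `x`, `y`,
`z`: delete `v` and its three incident edges `vx`, `vy`, `vz`, and add the edges
`xy`, `xz`, `yz` (omitting any edge already present). -/
def YTriangleMove {V : Type*} (G : SimpleGraph V) (v x y z : V) : SimpleGraph V :=
  SimpleGraph.fromEdgeSet
    ((G.edgeSet \ {s(v, x), s(v, y), s(v, z)}) ∪ {s(x, y), s(x, z), s(y, z)})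

/-- The vertices of `K₇`, namely `a, b, c, d, e, f, g`. -/
def inK7 : Vtx → Bool
  | .a | .b | .c | .d | .e | .f | .g => true
  | _ => false

/-- The complete graph `K₇` on the vertices `a, b, c, d, e, f, g`
(the vertices `h, i, j, k, l` are isolated, i.e. new). -/
def K7 : SimpleGraph Vtx where
  Adj x y := x ≠ y ∧ inK7 x ∧ inK7 y
  symm := ⟨fun _ _ ⟨hxy, hx, hy⟩ => ⟨hxy.symm, hy, hx⟩⟩
  loopless := ⟨fun _ hx => hx.1 rfl⟩

/-- `G₁`: `∇Y` on triangle `abc` with new center `h`. -/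
def G1 : SimpleGraph Vtx := triangleYMove K7 a b c h

/-- `G₂`: `∇Y` on triangle `ade` with new center `i`. -/
def G2 : SimpleGraph Vtx := triangleYMove G1 a d e i

/-- `G₃`: `∇Y` on triangle `afg` with new center `j`. -/
def G3 : SimpleGraph Vtx := triangleYMove G2 a f g j

/-- `G₄`: `∇Y` on triangle `bdf` with new center `k`. -/
def G4 : SimpleGraph Vtx := triangleYMove G3 b d f k

/-- `G₅`: `∇Y` on triangle `beg` with new center `l`. -/
def G5 : SimpleGraph Vtx := triangleYMove G4 b e g l

/-- `G₆`: `Y∇` at the degree-3 vertex `a`, whose neighbors are `h`, `i`, `j`. -/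
def G6 : SimpleGraph Vtx := YTriangleMove G5 a h i j

/-- `G₇`: `Y∇` at the degree-3 vertex `b`, whose neighbors are `h`, `k`, `l`. -/
def G7 : SimpleGraph Vtx := YTriangleMove G6 b h k l

/-- The edges of the target graph `G₇`:
cd, ce, cf, cg, ch, dg, di, dk, ef, ei, el, fj, fk, gj, gl, hi, hj, hk, hl, ij, kl. -/
def g7Edges : List (Vtx × Vtx) :=
  [(c, d), (c, e), (c, f), (c, g), (c, h), (d, g), (d, i), (d, k), (e, f), (e, i),
   (e, l), (f, j), (f, k), (g, j), (g, l), (h, i), (h, j), (h, k), (h, l), (i, j),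
   (k, l)]

/-- The graph `G₇` given explicitly on the vertex set `{c, d, e, f, g, h, i, j, k, l}`
(with `a` and `b` isolated), with edge set
`{cd, ce, cf, cg, ch, dg, di, dk, ef, ei, el, fj, fk, gj, gl, hi, hj, hk, hl, ij, kl}`. -/
def G7explicit : SimpleGraph Vtx where
  Adj x y := (x, y) ∈ g7Edges ∨ (y, x) ∈ g7Edges
  symm := ⟨fun _ _ => Or.symm⟩
  loopless := ⟨fun x => by cases x <;> decide⟩

noncomputable instance : DecidableRel G5.Adj := Classical.decRel _
noncomputable instance : DecidableRel G6.Adj := Classical.decRel _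

/-!
Each move only deletes and adds edges among explicitly named pairs of vertices, so adjacency
after a move is decided by adjacency before it. Every claim is therefore a finite check over
the twelve vertices, carried out by evaluation through the chain of moves.
-/

section Moves

variable {V : Type*} (G : SimpleGraph V)

theorem triangleYMove_adj (x y z v p q : V) :
    (triangleYMove G x y z v).Adj p q ↔
      ((G.Adj p q ∧ ¬(s(p, q) = s(x, y) ∨ s(p, q) = s(x, z) ∨ s(p, q) = s(y, z))) ∨
        s(p, q) = s(v, x) ∨ s(p, q) = s(v, y) ∨ s(p, q) = s(v, z)) ∧ p ≠ q := by
  simp only [triangleYMove, SimpleGraph.fromEdgeSet_adj, Set.mem_union, Set.mem_sdiff,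
    Set.mem_insert_iff, Set.mem_singleton_iff, SimpleGraph.mem_edgeSet]

theorem YTriangleMove_adj (v x y z p q : V) :
    (YTriangleMove G v x y z).Adj p q ↔
      ((G.Adj p q ∧ ¬(s(p, q) = s(v, x) ∨ s(p, q) = s(v, y) ∨ s(p, q) = s(v, z))) ∨
        s(p, q) = s(x, y) ∨ s(p, q) = s(x, z) ∨ s(p, q) = s(y, z)) ∧ p ≠ q := by
  simp only [YTriangleMove, SimpleGraph.fromEdgeSet_adj, Set.mem_union, Set.mem_sdiff,
    Set.mem_insert_iff, Set.mem_singleton_iff, SimpleGraph.mem_edgeSet]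

variable [DecidableEq V] [DecidableRel G.Adj]

instance (x y z v : V) : DecidableRel (triangleYMove G x y z v).Adj :=
  fun p q => decidable_of_iff' _ (triangleYMove_adj G x y z v p q)

instance (v x y z : V) : DecidableRel (YTriangleMove G v x y z).Adj :=
  fun p q => decidable_of_iff' _ (YTriangleMove_adj G v x y z p q)

end Moves

instance : DecidableRel K7.Adj :=
  fun x y => inferInstanceAs (Decidable (x ≠ y ∧ inK7 x ∧ inK7 y))

instance : DecidableRel G7explicit.Adj :=
  fun x y => inferInstanceAs (Decidable ((x, y) ∈ g7Edges ∨ (y, x) ∈ g7Edges))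

instance : DecidableRel G1.Adj := inferInstanceAs (DecidableRel (triangleYMove K7 a b c h).Adj)

instance : DecidableRel G2.Adj := inferInstanceAs (DecidableRel (triangleYMove G1 a d e i).Adj)

instance : DecidableRel G3.Adj := inferInstanceAs (DecidableRel (triangleYMove G2 a f g j).Adj)

instance : DecidableRel G4.Adj := inferInstanceAs (DecidableRel (triangleYMove G3 b d f k).Adj)

-- `G5` and `G6` carry classical `DecidableRel` instances, so they are unfolded below to
-- expose the computable instances of the moves.
theorem neighborFinset_G5_a : G5.neighborFinset a = {h, i, j} := by
  ext w
  rw [SimpleGraph.mem_neighborFinset]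
  unfold G5
  revert w
  decide

theorem neighborFinset_G6_b : G6.neighborFinset b = {h, k, l} := by
  ext w
  rw [SimpleGraph.mem_neighborFinset]
  unfold G6 G5
  revert w
  decide

theorem G7_eq_G7explicit : G7 = G7explicit := by
  ext p q
  unfold G7 G6 G5
  revert p q
  decide

/-- The graph `G₇` (given explicitly by its edge list) is obtained from `K₇` by the
sequence of five `∇Y` moves (on triangle `abc` with center `h`, on `ade` with
center `i`, on `afg` with center `j`, on `bdf` with center `k`, on `beg` with
center `l`) followed by two `Y∇` moves (at the degree-3 vertex `a`, whose neighbors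
are then `h, i, j`, and at the degree-3 vertex `b`, whose neighbors are then
`h, k, l`).  Each `∇Y` move is performed on an actual triangle whose center is a
new (isolated) vertex, and each `Y∇` move is performed at an actual degree-3
vertex. -/
theorem G7_obtained_from_K7_by_moves :
    -- `abc` is a triangle of `K₇` and `h` is a new vertex:
    (K7.Adj a b ∧ K7.Adj a c ∧ K7.Adj b c ∧ ∀ w, ¬ K7.Adj h w) ∧
    -- `ade` is a triangle of `G₁` and `i` is a new vertex:
    (G1.Adj a d ∧ G1.Adj a e ∧ G1.Adj d e ∧ ∀ w, ¬ G1.Adj i w) ∧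
    -- `afg` is a triangle of `G₂` and `j` is a new vertex:
    (G2.Adj a f ∧ G2.Adj a g ∧ G2.Adj f g ∧ ∀ w, ¬ G2.Adj j w) ∧
    -- `bdf` is a triangle of `G₃` and `k` is a new vertex:
    (G3.Adj b d ∧ G3.Adj b f ∧ G3.Adj d f ∧ ∀ w, ¬ G3.Adj k w) ∧
    -- `beg` is a triangle of `G₄` and `l` is a new vertex:
    (G4.Adj b e ∧ G4.Adj b g ∧ G4.Adj e g ∧ ∀ w, ¬ G4.Adj l w) ∧
    -- in `G₅` the vertex `a` has degree 3 with neighbors `h, i, j`: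
    (G5.degree a = 3 ∧ G5.neighborFinset a = {h, i, j}) ∧
    -- in `G₆` the vertex `b` has degree 3 with neighbors `h, k, l`:
    (G6.degree b = 3 ∧ G6.neighborFinset b = {h, k, l}) ∧
    -- the result of the seven moves is the graph `G₇`:
    G7 = G7explicit := by
  refine ⟨by decide, by decide, by decide, by decide, by decide,
    ⟨?_, neighborFinset_G5_a⟩, ⟨?_, neighborFinset_G6_b⟩, G7_eq_G7explicit⟩
  · rw [← SimpleGraph.card_neighborFinset_eq_degree, neighborFinset_G5_a]; rfl
  · rw [← SimpleGraph.card_neighborFinset_eq_degree, neighborFinset_G6_b]; rfl
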